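/- arXiv:1801.08313 — 3 statements merged into one kernel-verified Lean document; each statement's English description precedes it below -/
import Mathlib

section
/- Let 𝔸 = ℝ[s_{R_1},…,s_{R_k}] ⊂ Λ_{(k)} = ℝ[h_1,…,h_k], with fraction fields 𝕂 and 𝕃 respectively. Then each h_a (a = 1,…,k) is algebraic over 𝕂, the field 𝕃 is a finite algebraic extension of 𝕂 of degree [𝕃:𝕂] = k!, and the set of k-Schur functions indexed by the k-irreducible partitions forms a 𝕂-basis of 𝕃. -/
open MvPolynomial

/-- `Λ_(k) = ℝ[h_1,…,h_k]`, modelled as `MvPolynomial (Fin k) ℝ` with `X i = h_{i+1}`. -/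
noncomputable abbrev Lambdak (k : ℕ) := MvPolynomial (Fin k) ℝ

/-- `h_n` for `n ∈ ℤ`: `h_0 = 1`, `h_n = X (n-1)` for `1 ≤ n ≤ k`, `0` otherwise. -/
noncomputable def hsym (k : ℕ) (n : ℤ) : Lambdak k :=
  if hn : 0 < n ∧ n ≤ (k : ℤ) then X ⟨(n - 1).toNat, by omega⟩
  else if n = 0 then 1 else 0

/-- The rectangle Schur function `s_{R_{a+1}}`, `R_b = ((k-b+1)^b)`, via Jacobi-Trudi. -/
noncomputable def sR (k : ℕ) (a : Fin k) : Lambdak k :=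
  (Matrix.of fun i j : Fin (a.val + 1) =>
    hsym k ((((k : ℤ) - a.val) - i.val) + j.val)).det

/-- A `k`-irreducible partition, encoded by its part multiplicities:
`m j` is the number of parts equal to `j+1`, and irreducibility means that
there are at most `k - s` parts equal to `s` for each `s = 1,…,k`.
There are exactly `k!` such partitions. -/
def Irr (k : ℕ) : Type := { m : Fin k → ℕ // ∀ j : Fin k, m j + j.val + 1 ≤ k }

/-- `𝕃 = ℝ(h_1,…,h_k)`, the fraction field of `Λ_(k)`. -/
noncomputable abbrev FieldL (k : ℕ) := FractionRing (Lambdak k)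

/-- `𝕂 = ℝ(s_{R_1},…,s_{R_k})`, the subfield of `𝕃` generated over `ℝ` by the
rectangle Schur functions. -/
noncomputable def FieldK (k : ℕ) : IntermediateField ℝ (FieldL k) :=
  IntermediateField.adjoin ℝ
    (Set.range fun a => algebraMap (Lambdak k) (FieldL k) (sR k a))

/-!
An `ℝ`-basis of the form `s_R^p · s_κ` makes `Λ_(k)` a free module over the polynomial ring
`𝔸 = ℝ[s_{R_1},…,s_{R_k}]` with basis the irreducible `k`-Schur functions `s_κ`. Such a basis
survives passage to fraction fields: a `𝕂`-linear relation among the `s_κ` becomes an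
`𝔸`-linear one after clearing denominators, and the `𝕂`-span of the `s_κ` is a
finite-dimensional space containing `Λ_(k)`, so the `𝕂`-algebra generated by `Λ_(k)` is a
finite-dimensional domain, hence a field, hence all of `𝕃`. Counting irreducible partitions
gives `[𝕃 : 𝕂] = k!`.
-/

theorem IsFractionRing.submodule_eq_top_of_range_subset {Λ K L : Type*} [CommRing Λ] [Field K] [Field L]
    [Algebra Λ L] [IsFractionRing Λ L] [Algebra K L] (M : Submodule K L) [FiniteDimensional K M]
    (hM : Set.range (algebraMap Λ L) ⊆ M) : M = ⊤ := by
  set S := Algebra.adjoin K (Set.range (algebraMap Λ L))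
  have hSM : Subalgebra.toSubmodule S ≤ M := by
    rw [Algebra.adjoin_eq_span, Submodule.span_le]
    exact fun x hx => hM <|
      Submonoid.closure_le (S := MonoidHom.mrange (algebraMap Λ L : Λ →* L)).2 (fun _ h => h) hx
  have : FiniteDimensional K S := Submodule.finiteDimensional_of_le hSM
  refine eq_top_iff.2 fun x _ => hSM ?_
  obtain ⟨a, b, -, rfl⟩ := IsFractionRing.div_surjective (A := Λ) x
  have hb : algebraMap Λ L b ∈ S := Algebra.subset_adjoin ⟨b, rfl⟩
  rw [div_eq_mul_inv]
  refine S.mul_mem (Algebra.subset_adjoin ⟨a, rfl⟩) ?_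
  exact S.inv_mem_of_algebraic (x := ⟨_, hb⟩)
    ((Algebra.IsAlgebraic.isAlgebraic (⟨_, hb⟩ : S)).algHom S.val)

section PolyCombination

variable {R A σ ι : Type*} [CommSemiring R] [CommSemiring A] [Algebra R A] [Fintype ι]

variable (R) in
/-- Bijective exactly when `w` is a basis of `A` over `MvPolynomial σ R` acting through `s`. -/
noncomputable def polyCombination (s : σ → A) (w : ι → A) : (ι → MvPolynomial σ R) →ₗ[R] A :=
  ∑ i, LinearMap.mulRight R (w i) ∘ₗ (aeval s).toLinearMap ∘ₗ LinearMap.proj i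

theorem polyCombination_apply (s : σ → A) (w : ι → A) (P : ι → MvPolynomial σ R) :
    polyCombination R s w P = ∑ i, aeval s (P i) * w i := by
  simp [polyCombination]

theorem polyCombination_bijective [Fintype σ] (s : σ → A) (w : ι → A)
    (B : Module.Basis ((σ → ℕ) × ι) R A) (hB : ∀ p i, B (p, i) = (∏ a, s a ^ p a) * w i) :
    Function.Bijective (polyCombination R s w) := by
  classical
  let b := Pi.basis fun _ : ι => basisMonomials σ R
  let e : (Σ _ : ι, σ →₀ ℕ) ≃ (σ → ℕ) × ι :=
    (Equiv.sigmaEquivProd ι (σ →₀ ℕ)).trans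
      ((Equiv.prodComm _ _).trans (Finsupp.equivFunOnFinite.prodCongr (Equiv.refl ι)))
  suffices polyCombination R s w = (b.equiv B e).toLinearMap from this ▸ (b.equiv B e).bijective
  refine b.ext fun ⟨i, p⟩ => ?_
  rw [LinearEquiv.coe_coe, Module.Basis.equiv_apply, polyCombination_apply,
    Fintype.sum_eq_single i fun j hj => by simp [b, Pi.single_eq_of_ne hj]]
  simp [b, e, hB, aeval_monomial, Finsupp.prod_fintype]

end PolyCombination

section FractionField

variable {F Λ L σ ι : Type*} [Field F] [CommRing Λ] [Algebra F Λ] [Field L]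
  [Algebra Λ L] [Algebra F L] [IsScalarTower F Λ L] {s : σ → Λ}

theorem exists_mul_aeval_eq_of_mem_adjoin {x : L}
    (hx : x ∈ IntermediateField.adjoin F (Set.range fun a => algebraMap Λ L (s a))) :
    ∃ r t : MvPolynomial σ F,
      algebraMap Λ L (aeval s t) ≠ 0 ∧
        x * algebraMap Λ L (aeval s t) = algebraMap Λ L (aeval s r) := by
  obtain ⟨r, t, rfl⟩ := (IntermediateField.mem_adjoin_range_iff F _ x).1 hx
  erw [aeval_algebraMap_apply L s r, aeval_algebraMap_apply L s t]
  by_cases ht : algebraMap Λ L (aeval s t) = 0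
  · -- then `x = r / 0 = 0`
    exact ⟨0, 1, by simp, by simp [ht]⟩
  · exact ⟨r, t, ht, div_mul_cancel₀ _ ht⟩

theorem exists_common_aeval_denominator [Fintype ι]
    (g : ι → IntermediateField.adjoin F (Set.range fun a => algebraMap Λ L (s a))) :
    ∃ (t : MvPolynomial σ F) (r : ι → MvPolynomial σ F),
      algebraMap Λ L (aeval s t) ≠ 0 ∧
        ∀ i, (g i : L) * algebraMap Λ L (aeval s t) = algebraMap Λ L (aeval s (r i)) := by
  classical
  choose r t ht hrt using fun i => exists_mul_aeval_eq_of_mem_adjoin (g i).2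
  refine ⟨∏ i, t i, fun i => r i * ∏ j ∈ Finset.univ.erase i, t j, ?_, fun i => ?_⟩
  · simpa [Finset.prod_ne_zero_iff] using ht
  · rw [map_prod, map_prod, ← Finset.mul_prod_erase _ _ (Finset.mem_univ i), map_mul, map_mul,
      ← mul_assoc, hrt, map_prod, map_prod]

theorem linearIndependent_algebraMap_of_injective [IsFractionRing Λ L] [Fintype ι] {w : ι → Λ}
    (h : Function.Injective (polyCombination F s w)) :
    LinearIndependent (IntermediateField.adjoin F (Set.range fun a => algebraMap Λ L (s a)))
      (fun i => algebraMap Λ L (w i)) := by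
  rw [Fintype.linearIndependent_iff]
  intro g hg i
  obtain ⟨t, r, ht, hr⟩ := exists_common_aeval_denominator g
  have hr0 : polyCombination F s w r = 0 := by
    refine IsFractionRing.injective Λ L ?_
    rw [polyCombination_apply, map_sum, map_zero]
    calc ∑ j, algebraMap Λ L (aeval s (r j) * w j)
        = (∑ j, g j • algebraMap Λ L (w j)) * algebraMap Λ L (aeval s t) := by
          simp only [map_mul, ← hr, Finset.sum_mul, IntermediateField.smul_def]
          exact Finset.sum_congr rfl fun _ _ => by ring
      _ = 0 := by rw [hg, zero_mul]
  have hri : r i = 0 := congrFun (h (hr0.trans (map_zero _).symm)) i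
  have hgt : (g i : L) * algebraMap Λ L (aeval s t) = 0 := by rw [hr i, hri, map_zero, map_zero]
  exact_mod_cast (mul_eq_zero.1 hgt).resolve_right ht

theorem span_algebraMap_eq_top_of_surjective [IsFractionRing Λ L] [Fintype ι] {w : ι → Λ}
    (h : Function.Surjective (polyCombination F s w)) :
    Submodule.span (IntermediateField.adjoin F (Set.range fun a => algebraMap Λ L (s a)))
      (Set.range fun i => algebraMap Λ L (w i)) = ⊤ := by
  have := FiniteDimensional.span_of_finite
    (IntermediateField.adjoin F (Set.range fun a => algebraMap Λ L (s a)))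
    (Set.finite_range fun i => algebraMap Λ L (w i))
  refine IsFractionRing.submodule_eq_top_of_range_subset (Λ := Λ) _ ?_
  rintro _ ⟨f, rfl⟩
  obtain ⟨P, rfl⟩ := h f
  rw [polyCombination_apply, map_sum]
  refine Submodule.sum_mem _ fun i _ => ?_
  have hP : algebraMap Λ L (aeval s (P i)) ∈
      IntermediateField.adjoin F (Set.range fun a => algebraMap Λ L (s a)) := by
    refine (IntermediateField.mem_adjoin_range_iff F _ _).2 ⟨P i, 1, ?_⟩
    erw [aeval_algebraMap_apply L s (P i)]
    simp
  rw [map_mul]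
  exact Submodule.smul_mem _ (⟨_, hP⟩ : IntermediateField.adjoin F _)
    (Submodule.subset_span ⟨i, rfl⟩)

end FractionField

def Irr.equivPi (k : ℕ) : Irr k ≃ (∀ j : Fin k, Fin (k - j.val)) where
  toFun m := fun j => ⟨m.1 j, by have := m.2 j; omega⟩
  invFun v := ⟨fun j => v j, fun j => by have := (v j).isLt; dsimp only; omega⟩

noncomputable instance (k : ℕ) : Fintype (Irr k) := Fintype.ofEquiv _ (Irr.equivPi k).symm

theorem Irr.card_eq_factorial (k : ℕ) : Fintype.card (Irr k) = k.factorial := by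
  rw [Fintype.card_congr (Irr.equivPi k), Fintype.card_pi]
  simp only [Fintype.card_fin]
  rw [Fin.prod_univ_eq_prod_range (fun j => k - j) k, ← Nat.descFactorial_eq_prod_range,
    Nat.descFactorial_self]

theorem field_extension_kSchur_general (k : ℕ)
    (sIrr : Irr k → Lambdak k)
    (B : Module.Basis ((Fin k → ℕ) × Irr k) ℝ (Lambdak k))
    (hB : ∀ (p : Fin k → ℕ) (κ : Irr k),
      B (p, κ) = (∏ a : Fin k, sR k a ^ p a) * sIrr κ) :
    (∀ a : Fin k,
        IsAlgebraic (FieldK k) (algebraMap (Lambdak k) (FieldL k) (X a)))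
    ∧ FiniteDimensional (FieldK k) (FieldL k)
    ∧ Module.finrank (FieldK k) (FieldL k) = k.factorial
    ∧ ∃ b : Module.Basis (Irr k) (FieldK k) (FieldL k),
        ∀ κ : Irr k, b κ = algebraMap (Lambdak k) (FieldL k) (sIrr κ) := by
  obtain ⟨hinj, hsurj⟩ := polyCombination_bijective (sR k) sIrr B hB
  have hli := linearIndependent_algebraMap_of_injective (L := FieldL k) hinj
  have hsp := span_algebraMap_eq_top_of_surjective (L := FieldL k) hsurj
  let b : Module.Basis (Irr k) (FieldK k) (FieldL k) := .mk hli hsp.ge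
  have : FiniteDimensional (FieldK k) (FieldL k) := .of_basis b
  refine ⟨fun _ => Algebra.IsAlgebraic.isAlgebraic _, this, ?_, b, Module.Basis.mk_apply hli _⟩
  rw [Module.finrank_eq_card_basis b, Irr.card_eq_factorial]

/-- assuming the factorization property of `k`-Schur functions
(every `k`-Schur function is uniquely a monomial in the rectangle Schur
functions times an irreducible `k`-Schur function, and the `k`-Schur functions
form an `ℝ`-basis of `Λ_(k)`), each `h_a` is algebraic over `𝕂`, the extension
`𝕃/𝕂` is finite of degree `k!`, and the irreducible `k`-Schur functions form a
`𝕂`-basis of `𝕃`. -/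
theorem field_extension_kSchur (k : ℕ) (hk : 0 < k)
    (sIrr : Irr k → Lambdak k)
    (B : Module.Basis ((Fin k → ℕ) × Irr k) ℝ (Lambdak k))
    (hB : ∀ (p : Fin k → ℕ) (κ : Irr k),
      B (p, κ) = (∏ a : Fin k, sR k a ^ p a) * sIrr κ) :
    (∀ a : Fin k,
        IsAlgebraic (FieldK k) (algebraMap (Lambdak k) (FieldL k) (X a)))
    ∧ FiniteDimensional (FieldK k) (FieldL k)
    ∧ Module.finrank (FieldK k) (FieldL k) = k.factorial
    ∧ ∃ b : Module.Basis (Irr k) (FieldK k) (FieldL k),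
        ∀ κ : Irr k, b κ = algebraMap (Lambdak k) (FieldL k) (sIrr κ) :=
  field_extension_kSchur_general k sIrr B hB
end

section
/- Λ_{(k)} = ℝ[h_1,…,h_k] is an integral ring extension of 𝔸 = ℝ[s_{R_1},…,s_{R_k}]. -/
/-!
Give `h_j` weight `j`. Each `s_{R_a}` is then homogeneous of positive degree `a (k - a + 1)`.
Modulo any radical ideal containing all `s_{R_a}`, descending induction on `j` shows `h_j = 0`:
the Jacobi–Trudi matrix of `s_{R_{k-j+1}} = s_{(j^{k-j+1})}` has `h_j` on the diagonal and only
`h_{j'}` with `j' > j` above it, so it is lower triangular and `h_j ^ (k-j+1)` lies in the ideal.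
Hence some power of every `h_j` lies in the ideal generated by the `s_{R_a}`, and the graded
Nakayama argument shows that the monomials with bounded exponents span `Λ_(k)` over `𝔸`.
A finite extension is integral.
-/
open MvPolynomial

theorem Matrix.det_isWeightedHomogeneous {n σ R M : Type*} [Fintype n] [DecidableEq n]
    [CommRing R] [AddCommMonoid M] {w : σ → M} (A : Matrix n n (MvPolynomial σ R))
    (d e : n → M) (hA : ∀ i j, IsWeightedHomogeneous w (A i j) (d i + e j)) :
    IsWeightedHomogeneous w A.det (∑ i, d i + ∑ j, e j) := by
  rw [Matrix.det_apply]
  refine IsWeightedHomogeneous.sum _ _ _ fun τ _ => ?_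
  have hprod := IsWeightedHomogeneous.prod _ _ _ fun i (_ : i ∈ Finset.univ) => hA (τ i) i
  rw [Finset.sum_add_distrib, Equiv.sum_comp τ d] at hprod
  rw [← mem_weightedHomogeneousSubmodule] at hprod ⊢
  rw [Units.smul_def]
  exact zsmul_mem hprod _

theorem Matrix.det_sub_prod_diag_mem {n R : Type*} [Fintype n] [DecidableEq n] [LinearOrder n]
    [CommRing R] {J : Ideal R} (M : Matrix n n R) (hM : ∀ i j, i < j → M i j ∈ J) :
    M.det - ∏ i, M i i ∈ J := by
  rw [← Ideal.Quotient.eq, RingHom.map_det, map_prod, Matrix.det_of_isLowerTriangular]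
  · rfl
  · exact fun i j hij => Ideal.Quotient.eq_zero_iff_mem.mpr (hM i j hij)

namespace MvPolynomial

variable {σ ι R : Type*} [CommSemiring R]

theorem isWeightedHomogeneous_natCast_iff {w : σ → ℕ} {p : MvPolynomial σ R} {d : ℕ} :
    IsWeightedHomogeneous (fun i => (w i : ℤ)) p d ↔ IsWeightedHomogeneous w p d := by
  have hweight (m : σ →₀ ℕ) : Finsupp.weight (fun i => (w i : ℤ)) m = Finsupp.weight w m := by
    simp [Finsupp.weight_apply, Finsupp.sum]
  simp only [IsWeightedHomogeneous, hweight, Nat.cast_inj]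

attribute [local instance] weightedGradedAlgebra in
theorem weightedHomogeneousComponent_mul_of_isWeightedHomogeneous_right {w : σ → ℕ}
    {f : MvPolynomial σ R} {d : ℕ} (hf : IsWeightedHomogeneous w f d) (p : MvPolynomial σ R)
    (n : ℕ) :
    weightedHomogeneousComponent w n (p * f) =
      if d ≤ n then weightedHomogeneousComponent w (n - d) p * f else 0 := by
  simp only [← weightedDecomposition.decompose'_apply]
  exact DirectSum.coe_decompose_mul_of_right_mem (weightedHomogeneousSubmodule R w) n hf

variable {w : σ → ℕ} {f : ι → MvPolynomial σ R} {D : ι → ℕ}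

theorem weightedHomogeneousComponent_mem_of_mem_span [Fintype ι]
    (hf : ∀ a, IsWeightedHomogeneous w (f a) (D a)) (hD : ∀ a, 0 < D a) {n : ℕ}
    (M : Submodule (Algebra.adjoin R (Set.range f)) (MvPolynomial σ R))
    (hM : ∀ e < n, ∀ q, IsWeightedHomogeneous w q e → q ∈ M)
    {p : MvPolynomial σ R} (hp : p ∈ Ideal.span (Set.range f)) :
    weightedHomogeneousComponent w n p ∈ M := by
  obtain ⟨c, rfl⟩ := Ideal.mem_span_range_iff_exists_fun.mp hp
  rw [map_sum]
  refine Submodule.sum_mem _ fun a _ => ?_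
  rw [weightedHomogeneousComponent_mul_of_isWeightedHomogeneous_right (hf a)]
  split_ifs with hle
  · have hlt : n - D a < n := Nat.sub_lt_self (hD a) hle
    rw [mul_comm]
    exact M.smul_mem ⟨f a, Algebra.subset_adjoin ⟨a, rfl⟩⟩
      (hM _ hlt _ (weightedHomogeneousComponent_isWeightedHomogeneous _ _))
  · exact M.zero_mem

theorem finite_adjoin_of_forall_X_mem_radical [Finite σ] [Fintype ι]
    (hf : ∀ a, IsWeightedHomogeneous w (f a) (D a)) (hD : ∀ a, 0 < D a)
    (hX : ∀ i, X i ∈ (Ideal.span (Set.range f)).radical) :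
    Module.Finite (Algebra.adjoin R (Set.range f)) (MvPolynomial σ R) := by
  classical
  choose n hn using hX
  set N : σ →₀ ℕ := Finsupp.equivFunOnFinite.symm n
  set M := Submodule.span (Algebra.adjoin R (Set.range f))
    ((fun m => monomial m (1 : R)) '' Set.Iic N)
  have hhom (d : ℕ) (q : MvPolynomial σ R) (hq : IsWeightedHomogeneous w q d) : q ∈ M := by
    induction d using Nat.strong_induction_on generalizing q with
    | _ d ih =>
    induction hq using IsWeightedHomogeneous.induction_on with
    | zero => exact M.zero_mem
    | add p q _ _ hp hq => exact M.add_mem hp hq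
    | monomial m r hm =>
      by_cases hmN : m ≤ N
      · have h1 : monomial m (1 : R) ∈ M := Submodule.subset_span ⟨m, hmN, rfl⟩
        simpa [smul_monomial] using M.smul_of_tower_mem r h1
      · obtain ⟨i, hi⟩ : ∃ i, N i < m i := by simpa [Finsupp.le_def] using hmN
        have hdvd : X i ^ n i ∣ monomial m r := by
          rw [X_pow_eq_monomial, monomial_dvd_monomial]
          exact ⟨Or.inr (Finsupp.single_le_iff.mpr hi.le), one_dvd r⟩
        rw [← (isWeightedHomogeneous_monomial w m r hm).weightedHomogeneousComponent_same]
        exact weightedHomogeneousComponent_mem_of_mem_span hf hD M ih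
          (Ideal.mem_of_dvd _ hdvd (hn i))
  have hM : M = ⊤ := eq_top_iff.mpr fun p _ => by
    rw [p.as_sum]
    exact Submodule.sum_mem _ fun m _ => hhom _ _ (isWeightedHomogeneous_monomial w m _ rfl)
  exact ⟨Submodule.fg_def.mpr ⟨_, (Set.finite_Iic N).image _, hM⟩⟩

end MvPolynomial

-- Degrees are taken in `ℤ` because the Jacobi–Trudi entry `h_{(k-a-r)+c}` splits into a row
-- part `k-a-r`, which can be negative, and a column part `c`.
theorem hsym_isWeightedHomogeneous (k : ℕ) (n : ℤ) :
    IsWeightedHomogeneous (fun i : Fin k => ((i.val + 1 : ℕ) : ℤ)) (hsym k n) n := by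
  unfold hsym
  split_ifs with hn h0
  · convert isWeightedHomogeneous_X ℝ _ _ using 1
    push_cast
    omega
  · exact h0 ▸ isWeightedHomogeneous_one ℝ _
  · exact isWeightedHomogeneous_zero ℝ _ _

theorem sR_isWeightedHomogeneous (k : ℕ) (a : Fin k) :
    IsWeightedHomogeneous (fun i : Fin k => i.val + 1) (sR k a) ((a + 1) * (k - a)) := by
  have hdeg : ∑ r : Fin (a + 1), ((k : ℤ) - a - r) + ∑ c : Fin (a + 1), (c : ℤ) =
      ((a + 1) * (k - a) : ℕ) := by
    simp only [Finset.sum_sub_distrib, Finset.sum_const, Finset.card_univ, Fintype.card_fin]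
    push_cast [Nat.cast_sub a.isLt.le]
    ring
  have hdet := Matrix.det_isWeightedHomogeneous
    (Matrix.of fun r c : Fin (a + 1) => hsym k (k - a - r + c)) _ _
    fun r c => hsym_isWeightedHomogeneous k _
  rw [hdeg, isWeightedHomogeneous_natCast_iff] at hdet
  exact hdet

theorem hsym_natCast_add_one (k : ℕ) (i : Fin k) : hsym k (i + 1) = X i := by
  rw [hsym, dif_pos (by omega)]
  congr
  omega

theorem hsym_mem_of_forall_lt {k : ℕ} {J : Ideal (Lambdak k)} {i : Fin k}
    (hJ : ∀ j, i < j → X j ∈ J) {n : ℤ} (hn : (i : ℤ) + 1 < n) : hsym k n ∈ J := by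
  unfold hsym
  split_ifs with h1 h0
  · exact hJ _ (Fin.lt_def.mpr (by simp only [Int.pred_toNat]; omega))
  · omega
  · exact J.zero_mem

theorem X_mem_of_forall_sR_mem {k : ℕ} {J : Ideal (Lambdak k)} (hJ : J.IsRadical)
    (hsR : ∀ a, sR k a ∈ J) (i : Fin k) : X i ∈ J := by
  induction i using WellFoundedGT.induction with
  | _ i ih =>
  set a : Fin k := ⟨k - 1 - i, by omega⟩
  have hdet := Matrix.det_sub_prod_diag_mem (J := J)
    (Matrix.of fun r c : Fin (a + 1) => hsym k (k - a - r + c))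
    fun r c hrc => hsym_mem_of_forall_lt ih (by rw [Fin.lt_def] at hrc; simp only [a]; omega)
  have hdiag (r : Fin (a + 1)) : hsym k (k - a - r + r) = X i := by
    rw [← hsym_natCast_add_one]
    congr 1
    simp only [sub_add_cancel, a]
    omega
  simp only [Matrix.of_apply, hdiag, Finset.prod_const, Finset.card_univ, Fintype.card_fin] at hdet
  have hpow : X i ^ (a.val + 1) ∈ J := by
    simpa only [sR, sub_sub_cancel] using J.sub_mem (hsR a) hdet
  exact hJ ⟨_, hpow⟩

theorem lambdak_isIntegral_over_rectangles_general (k : ℕ) :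
    Algebra.IsIntegral (Algebra.adjoin ℝ (Set.range (sR k))) (Lambdak k) := by
  have hfinite : Module.Finite (Algebra.adjoin ℝ (Set.range (sR k))) (Lambdak k) :=
    finite_adjoin_of_forall_X_mem_radical (sR_isWeightedHomogeneous k)
      (fun a => Nat.mul_pos a.val.succ_pos (Nat.sub_pos_of_lt a.isLt))
      (X_mem_of_forall_sR_mem (Ideal.radical_isRadical _) fun a =>
        Ideal.le_radical (Ideal.subset_span ⟨a, rfl⟩))
  exact Algebra.IsIntegral.of_finite _ _

/-- `Λ_(k) = ℝ[h_1,…,h_k]` is an integral ring extension of the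
subalgebra `𝔸 = ℝ[s_{R_1},…,s_{R_k}]` generated by the rectangle Schur
functions. -/
theorem lambdak_isIntegral_over_rectangles (k : ℕ) (hk : 0 < k) :
    Algebra.IsIntegral (Algebra.adjoin ℝ (Set.range (sR k))) (Lambdak k) :=
  lambdak_isIntegral_over_rectangles_general k
end

section
/- Let J ⊂ Λ_{(k)} be the ideal generated by the elements s_{R_a} − r_a (a = 1,…,k) for fixed reals r_1,…,r_k, and let Λ̄_{(k)} = Λ_{(k)}/J. Then Λ̄_{(k)} has dimension k! over ℝ, and the images of the k-Schur functions s̄_κ for κ ranging over the k-irreducible partitions form an ℝ-basis of Λ̄_{(k)}. -/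
/-!
The hypothesis says that `Λ_(k)` is free over `ℝ[s_{R_1},…,s_{R_k}]` with basis the irreducible
`k`-Schur functions `s_κ`. Modulo `J` every basis vector `s_R^p s_κ` becomes `r^p s_κ`, so the
`s̄_κ` span the quotient. They are independent because the map taking coordinates over
`ℝ[s_R]` and then evaluating them at `s_R = r` vanishes on `J` and sends `s_κ` to the `κ`-th unit
vector. Finally, a `k`-irreducible partition is a choice of multiplicities `m_j < k - j`, and there
are `k!` of those.
-/

open MvPolynomial

open Module

lemma Fintype.prod_pow_add_single {σ M : Type*} [Fintype σ] [DecidableEq σ] [CommMonoid M]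
    (y : σ → M) (p : σ → ℕ) (a : σ) :
    ∏ b, y b ^ (p + Pi.single a 1 : σ → ℕ) b = (∏ b, y b ^ p b) * y a := by
  simp only [Pi.add_apply, pow_add, Finset.prod_mul_distrib]
  simp [Pi.single_apply, pow_ite]

section Fiber

variable {K A ι σ : Type*} [CommRing K] [CommRing A] [Algebra K A] [Fintype σ]

def fiberIdeal (x : σ → A) (r : σ → K) : Ideal A :=
  Ideal.span (Set.range fun a => x a - algebraMap K A (r a))

lemma mk_fiberIdeal_prod_pow (x : σ → A) (r : σ → K) (p : σ → ℕ) :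
    Ideal.Quotient.mk (fiberIdeal x r) (∏ a, x a ^ p a) =
      Ideal.Quotient.mk (fiberIdeal x r) (algebraMap K A (∏ a, r a ^ p a)) := by
  have hx (a : σ) : Ideal.Quotient.mk (fiberIdeal x r) (x a) =
      Ideal.Quotient.mk (fiberIdeal x r) (algebraMap K A (r a)) :=
    Ideal.Quotient.eq.mpr (Ideal.subset_span ⟨a, rfl⟩)
  simp only [map_prod, map_pow, hx]

/-- Writing `f = ∑ c_{p,κ} x^p s_κ`, this is `κ ↦ ∑_p c_{p,κ} r^p`: the coordinates of `f` over
`K[x]`, specialised at `x = r`. -/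
noncomputable def specializeCoords (B : Basis ((σ → ℕ) × ι) K A) (r : σ → K) :
    A →ₗ[K] ι →₀ K :=
  B.constr K fun i => (∏ a, r a ^ i.1 a) • Finsupp.single i.2 1

variable {x : σ → A} {s : ι → A} {B : Basis ((σ → ℕ) × ι) K A}
  (hB : ∀ p κ, B (p, κ) = (∏ a, x a ^ p a) * s κ) (r : σ → K)
include hB

lemma specializeCoords_mul (a : σ) (f : A) :
    specializeCoords B r (f * x a) = r a • specializeCoords B r f := by
  classical
  suffices (specializeCoords B r).comp (LinearMap.mulRight K (x a)) =
      r a • specializeCoords B r from LinearMap.congr_fun this f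
  refine B.ext fun ⟨p, κ⟩ => ?_
  have hshift : B (p, κ) * x a = B ((p + Pi.single a 1 : σ → ℕ), κ) := by
    rw [hB, hB, Fintype.prod_pow_add_single, mul_right_comm]
  simp only [LinearMap.comp_apply, LinearMap.mulRight_apply, LinearMap.smul_apply, hshift,
    specializeCoords, Basis.constr_basis, Fintype.prod_pow_add_single, smul_smul, mul_comm]

lemma specializeCoords_eq_zero_of_mem {f : A} (hf : f ∈ fiberIdeal x r) :
    specializeCoords B r f = 0 := by
  obtain ⟨c, rfl⟩ := Ideal.mem_span_range_iff_exists_fun.mp hf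
  rw [map_sum]
  refine Finset.sum_eq_zero fun a _ => ?_
  rw [mul_sub, map_sub, specializeCoords_mul hB, mul_comm, ← Algebra.smul_def, map_smul, sub_self]

lemma specializeCoords_apply_self (κ : ι) : specializeCoords B r (s κ) = Finsupp.single κ 1 := by
  have hs : s κ = B (0, κ) := by simp [hB]
  simp [hs, specializeCoords]

lemma mk_fiberIdeal_basis (p : σ → ℕ) (κ : ι) :
    Ideal.Quotient.mk (fiberIdeal x r) (B (p, κ)) =
      (∏ a, r a ^ p a) • Ideal.Quotient.mk (fiberIdeal x r) (s κ) := by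
  rw [hB, map_mul, mk_fiberIdeal_prod_pow, ← map_mul, ← Algebra.smul_def]
  rfl

lemma specializeCoords_linearCombination (l : ι →₀ K) :
    specializeCoords B r (Finsupp.linearCombination K s l) = l := by
  induction l using Finsupp.induction_linear with
  | zero => simp
  | add l₁ l₂ h₁ h₂ => rw [map_add, map_add, h₁, h₂]
  | single κ c => simp [specializeCoords_apply_self hB]

lemma linearIndependent_mk_fiberIdeal :
    LinearIndependent K fun κ => Ideal.Quotient.mk (fiberIdeal x r) (s κ) := by
  refine linearIndependent_iff.mpr fun l hl => ?_
  have hmem : Finsupp.linearCombination K s l ∈ fiberIdeal x r := by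
    rw [← Ideal.Quotient.eq_zero_iff_mem, ← hl]
    exact Finsupp.apply_linearCombination K (Ideal.Quotient.mkₐ K (fiberIdeal x r)).toLinearMap s l
  rw [← specializeCoords_linearCombination hB r l, specializeCoords_eq_zero_of_mem hB r hmem]

lemma span_mk_fiberIdeal :
    ⊤ ≤ Submodule.span K (Set.range fun κ => Ideal.Quotient.mk (fiberIdeal x r) (s κ)) := by
  let mk := (Ideal.Quotient.mkₐ K (fiberIdeal x r)).toLinearMap
  have hspan : Submodule.span K (Set.range (mk ∘ B)) = ⊤ := by
    rw [Set.range_comp, ← Submodule.map_span, B.span_eq, Submodule.map_top,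
      LinearMap.range_eq_top]
    exact Ideal.Quotient.mkₐ_surjective K _
  rw [← hspan, Submodule.span_le]
  rintro _ ⟨⟨p, κ⟩, rfl⟩
  change Ideal.Quotient.mk _ (B (p, κ)) ∈ _
  rw [mk_fiberIdeal_basis hB r p κ]
  exact Submodule.smul_mem _ _ (Submodule.subset_span ⟨κ, rfl⟩)

noncomputable def fiberBasis : Basis ι K (A ⧸ fiberIdeal x r) :=
  .mk (linearIndependent_mk_fiberIdeal hB r) (span_mk_fiberIdeal hB r)

lemma fiberBasis_apply (κ : ι) : fiberBasis hB r κ = Ideal.Quotient.mk (fiberIdeal x r) (s κ) :=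
  Basis.mk_apply _ _ κ

end Fiber

def irrEquivPi (k : ℕ) : Irr k ≃ ∀ j : Fin k, Fin (k - j) where
  toFun m j := ⟨m.1 j, by have := m.2 j; omega⟩
  invFun f := ⟨fun j => (f j).1, fun j => by
    have := (f j).2; show (f j).1 + j.val + 1 ≤ k; omega⟩

lemma card_irr (k : ℕ) : Nat.card (Irr k) = k.factorial := by
  rw [Nat.card_congr (irrEquivPi k), Nat.card_pi]
  simp only [Nat.card_eq_fintype_card, Fintype.card_fin]
  rw [Fin.prod_univ_eq_prod_range (k - ·) k, ← Nat.descFactorial_eq_prod_range,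
    Nat.descFactorial_self]

theorem quotient_dimension_and_basis_general (k : ℕ)
    (sIrr : Irr k → Lambdak k)
    (B : Module.Basis ((Fin k → ℕ) × Irr k) ℝ (Lambdak k))
    (hB : ∀ (p : Fin k → ℕ) (κ : Irr k),
      B (p, κ) = (∏ a : Fin k, sR k a ^ p a) * sIrr κ)
    (r : Fin k → ℝ) (J : Ideal (Lambdak k))
    (hJ : J = Ideal.span (Set.range fun a : Fin k => sR k a - C (r a))) :
    Module.finrank ℝ (Lambdak k ⧸ J) = k.factorial
    ∧ ∃ b : Module.Basis (Irr k) ℝ (Lambdak k ⧸ J),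
        ∀ κ : Irr k, b κ = Ideal.Quotient.mk J (sIrr κ) := by
  obtain rfl : J = fiberIdeal (sR k) r := by rw [hJ, fiberIdeal, MvPolynomial.algebraMap_eq]
  refine ⟨?_, fiberBasis hB r, fiberBasis_apply hB r⟩
  rw [Module.finrank_eq_nat_card_basis (fiberBasis hB r), card_irr]

/-- assuming the factorization property of `k`-Schur functions
(the products of rectangle Schur monomials with irreducible `k`-Schur
functions form an `ℝ`-basis of `Λ_(k)`), the quotient
`Λ̄_(k) = Λ_(k)/⟨s_{R_a} - r_a⟩` has `ℝ`-dimension `k!`, and the images of the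
irreducible `k`-Schur functions form an `ℝ`-basis of it. -/
theorem quotient_dimension_and_basis (k : ℕ) (hk : 0 < k)
    (sIrr : Irr k → Lambdak k)
    (B : Module.Basis ((Fin k → ℕ) × Irr k) ℝ (Lambdak k))
    (hB : ∀ (p : Fin k → ℕ) (κ : Irr k),
      B (p, κ) = (∏ a : Fin k, sR k a ^ p a) * sIrr κ)
    (r : Fin k → ℝ) (J : Ideal (Lambdak k))
    (hJ : J = Ideal.span (Set.range fun a : Fin k => sR k a - C (r a))) :
    Module.finrank ℝ (Lambdak k ⧸ J) = k.factorial
    ∧ ∃ b : Module.Basis (Irr k) ℝ (Lambdak k ⧸ J),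
        ∀ κ : Irr k, b κ = Ideal.Quotient.mk J (sIrr κ) :=
  quotient_dimension_and_basis_general k sIrr B hB r J hJ
end
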